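/- arXiv:2108.03590 — 2 statements merged into one kernel-verified Lean document; each statement's English description precedes it below -/
import Mathlib

section
/- Let m ≥ 0 and n ≥ m+3 be integers, and let r_{n,m}^+ > 0 be the unique positive zero of N_{n,m}(x). Then 0 < r_{n,m}^+ ≤ 1/3. -/
/-- The generalized Narayana polynomial `N_{n,m}(x)`, with the convention
`C(m, k-1) = 0` when `k = 0`. -/
noncomputable def genNarayana (n m : ℕ) (x : ℝ) : ℝ :=
  ∑ k ∈ Finset.range (n + 1),
    (((n.choose k : ℝ) * (m.choose k : ℝ)) -
      (if k = 0 then 0 else (n.choose (k + 1) : ℝ) * (m.choose (k - 1) : ℝ))) * x ^ k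

/-!
Write `c k` for the coefficients of `N_{n,m}`. For `k ≥ 1` the identity
`k (k + 1) c k = C(n,k) C(m,k-1) ((m + 1) - k (n - m))` shows that the coefficients can change
sign only at `t = (m + 1) / (n - m)`, and `c (m + 1) < 0`; hence `x ↦ N_{n,m}(x) / x ^ t` is
strictly decreasing on `(0, ∞)`, and it suffices to show `N_{n,m}(1/3) ≤ 0`.

Since `N_{n,m}(x)` is `[z^m] - x⁻¹ [z^(m+2)]` of `(1 + x z)^n (1 + z)^m`, we get
`3^n N_{n,m}(1/3) = a m - 3 a (m + 2)`, where `a` are the coefficients of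
`thirdPoly n m = (X + 3)^n (X + 1)^m = (X + 3)^(n-m) B` with `B = thirdPoly m m`. From
`X^(2m) B(3/X) = 3^m B(X)` the coefficients of `B` satisfy `b (m - j) = 3^j b (m + j)`, and
log-concavity of binomial coefficients gives `b i ≤ 3 b (i + 2)` for `i + 2 ≤ m`. Expanding
`(X + 3)^(n-m)` and comparing term by term gives `a m ≤ 3 a (m + 2)` as soon as `C(n-m, 2) ≥ 3`.
-/

open Finset Polynomial

theorem sum_mul_pow_lt_sum_mul_rpow_of_sign_change {s : Finset ℕ} {d : ℕ → ℝ} {t : ℝ}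
    (h_nonneg : ∀ k ∈ s, (k : ℝ) ≤ t → 0 ≤ d k) (h_nonpos : ∀ k ∈ s, t < k → d k ≤ 0)
    {k₀ : ℕ} (hk₀ : k₀ ∈ s) (ht : t < k₀) (hd : d k₀ < 0) {q : ℝ} (hq : 1 < q) :
    ∑ k ∈ s, d k * q ^ k < (∑ k ∈ s, d k) * q ^ t := by
  rw [sum_mul]
  refine sum_lt_sum (fun k hk => ?_) ⟨k₀, hk₀, ?_⟩
  · rw [← Real.rpow_natCast]
    rcases le_or_gt (k : ℝ) t with hkt | hkt
    · exact mul_le_mul_of_nonneg_left (Real.rpow_le_rpow_of_exponent_le hq.le hkt)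
        (h_nonneg k hk hkt)
    · exact mul_le_mul_of_nonpos_left (Real.rpow_le_rpow_of_exponent_le hq.le hkt.le)
        (h_nonpos k hk hkt)
  · rw [← Real.rpow_natCast]
    exact mul_lt_mul_of_neg_left (Real.rpow_lt_rpow_of_exponent_lt hq ht) hd

theorem Nat.cast_choose_succ_right_eq {R : Type*} [CommRing R] (n k : ℕ) :
    (n.choose (k + 1) : R) * (k + 1) = n.choose k * (n - k) := by
  rcases le_or_gt k n with hk | hk
  · simpa [Nat.cast_sub hk] using congrArg (Nat.cast : ℕ → R) (Nat.choose_succ_right_eq n k)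
  · simp [Nat.choose_eq_zero_of_lt hk, Nat.choose_eq_zero_of_lt (hk.trans k.lt_succ_self)]

section Coefficients

noncomputable def genNarayanaCoeff (n m k : ℕ) : ℝ :=
  (n.choose k : ℝ) * (m.choose k : ℝ) -
    (if k = 0 then 0 else (n.choose (k + 1) : ℝ) * (m.choose (k - 1) : ℝ))

theorem genNarayana_eq_sum (n m : ℕ) (x : ℝ) :
    genNarayana n m x = ∑ k ∈ range (n + 1), genNarayanaCoeff n m k * x ^ k := rfl

variable {n m k : ℕ}

theorem mul_succ_mul_genNarayanaCoeff (hk : k ≠ 0) :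
    (k * (k + 1)) * genNarayanaCoeff n m k =
      n.choose k * m.choose (k - 1) * ((m + 1) - k * ((n : ℝ) - m)) := by
  obtain ⟨j, rfl⟩ := Nat.exists_eq_succ_of_ne_zero hk
  have hn := Nat.cast_choose_succ_right_eq (R := ℝ) n (j + 1)
  have hm := Nat.cast_choose_succ_right_eq (R := ℝ) m j
  simp only [genNarayanaCoeff, if_neg hk]
  push_cast at hn hm ⊢
  linear_combination (j + 1 + 1 : ℝ) * (n.choose (j + 1) : ℝ) * hm - (j + 1) * m.choose j * hn

theorem genNarayanaCoeff_nonneg (hk : (k : ℝ) * (n - m) ≤ m + 1) :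
    0 ≤ genNarayanaCoeff n m k := by
  rcases eq_or_ne k 0 with rfl | hk₀
  · simp [genNarayanaCoeff]
  refine (mul_nonneg_iff_of_pos_left (c := (k : ℝ) * (k + 1)) (by positivity)).mp ?_
  rw [mul_succ_mul_genNarayanaCoeff hk₀]
  exact mul_nonneg (by positivity) (by linarith)

theorem genNarayanaCoeff_nonpos (hk : (m + 1 : ℝ) < k * (n - m)) :
    genNarayanaCoeff n m k ≤ 0 := by
  have hk₀ : k ≠ 0 := by rintro rfl; rw [Nat.cast_zero, zero_mul] at hk; linarith
  refine nonpos_of_mul_nonpos_right (a := (k : ℝ) * (k + 1)) ?_ (by positivity)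
  rw [mul_succ_mul_genNarayanaCoeff hk₀]
  exact mul_nonpos_of_nonneg_of_nonpos (by positivity) (by linarith)

theorem genNarayanaCoeff_add_one_neg (h : m + 2 ≤ n) : genNarayanaCoeff n m (m + 1) < 0 := by
  simpa [genNarayanaCoeff] using Nat.choose_pos h

end Coefficients

theorem Polynomial.coeff_X_add_C_pow_mul {R : Type*} [CommSemiring R] (r : R) (d i : ℕ)
    (p : R[X]) :
    ((X + C r) ^ d * p).coeff i =
      ∑ j ∈ range (d + 1), r ^ (d - j) * d.choose j * (X ^ j * p).coeff i := by
  rw [add_pow, sum_mul, finsetSum_coeff]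
  refine sum_congr rfl fun j _ => ?_
  rw [← coeff_C_mul]
  congr 1
  simp only [map_mul, map_pow, map_natCast]
  ring

theorem Polynomial.coeff_X_pow_add_mul_X_add_one_pow {R : Type*} [Semiring R] (m k j : ℕ) :
    (X ^ (k + j) * (X + 1 : R[X]) ^ m).coeff (m + j) = (m.choose k : R) := by
  rw [coeff_X_pow_mul', coeff_X_add_one_pow]
  split_ifs with h
  · rw [show m + j - (k + j) = m - k by omega, Nat.choose_symm (by omega)]
  · rw [Nat.choose_eq_zero_of_lt (by omega), Nat.cast_zero]

theorem Nat.choose_mul_choose_le_choose_succ_mul_choose_succ {m p q : ℕ} (h : p + q < m) :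
    m.choose p * m.choose q ≤ m.choose (p + 1) * m.choose (q + 1) := by
  refine Nat.le_of_mul_le_mul_right (c := (p + 1) * (q + 1)) ?_ (by positivity)
  calc m.choose p * m.choose q * ((p + 1) * (q + 1))
      ≤ m.choose p * m.choose q * ((m - q) * (m - p)) :=
        Nat.mul_le_mul_left _ (Nat.mul_le_mul (by omega) (by omega))
    _ = m.choose (p + 1) * m.choose (q + 1) * ((p + 1) * (q + 1)) := by
        linear_combination (m.choose q * (m - q)) * (Nat.choose_succ_right_eq m p).symm +
          (m.choose (p + 1) * (p + 1)) * (Nat.choose_succ_right_eq m q).symm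

noncomputable def thirdPoly (n m : ℕ) : ℕ[X] := (X + C 3) ^ n * (X + 1) ^ m

theorem thirdPoly_coeff (n m i : ℕ) :
    (thirdPoly n m).coeff i =
      ∑ pq ∈ antidiagonal i, 3 ^ (n - pq.1) * n.choose pq.1 * m.choose pq.2 := by
  simp only [thirdPoly, coeff_mul, coeff_X_add_C_pow, coeff_X_add_one_pow, Nat.cast_id]

theorem thirdPoly_coeff_self (n m : ℕ) :
    (thirdPoly n m).coeff m = ∑ k ∈ range (n + 1), 3 ^ (n - k) * n.choose k * m.choose k := by
  rw [thirdPoly, coeff_X_add_C_pow_mul]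
  refine sum_congr rfl fun k _ => ?_
  have := coeff_X_pow_add_mul_X_add_one_pow (R := ℕ) m k 0
  simp only [add_zero, Nat.cast_id] at this ⊢
  rw [this]

theorem mul_pow_sub_succ_mul_choose_succ (b n k : ℕ) :
    b * b ^ (n - (k + 1)) * n.choose (k + 1) = b ^ (n - k) * n.choose (k + 1) := by
  rcases le_or_gt (k + 1) n with h | h
  · rw [← pow_succ', show n - (k + 1) + 1 = n - k by omega]
  · simp [Nat.choose_eq_zero_of_lt h]

theorem three_mul_thirdPoly_coeff_add_two (n m : ℕ) :
    3 * (thirdPoly n m).coeff (m + 2) =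
      ∑ k ∈ range (n + 1),
        3 ^ (n - k) * if k = 0 then 0 else n.choose (k + 1) * m.choose (k - 1) := by
  let g : ℕ → ℕ := fun j =>
    3 * (3 ^ (n - j) * n.choose j * (X ^ j * (X + 1 : ℕ[X]) ^ m).coeff (m + 2))
  have hshift (k : ℕ) :
      g (k + 1) = 3 ^ (n - k) * if k = 0 then 0 else n.choose (k + 1) * m.choose (k - 1) := by
    simp only [g]
    rw [← mul_assoc, ← mul_assoc, mul_pow_sub_succ_mul_choose_succ]
    rcases k with _ | k
    · simp [coeff_X_add_one_pow]
    · rw [show k + 1 + 1 = k + 2 by rfl, coeff_X_pow_add_mul_X_add_one_pow, Nat.cast_id,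
        if_neg k.succ_ne_zero, Nat.add_sub_cancel]
      ring
  have hfirst : g 0 = 0 := by simp [g, coeff_X_add_one_pow, Nat.choose_eq_zero_of_lt]
  have hlast : g (n + 1) = 0 := by simp [g]
  have hsum := sum_range_succ' g (n + 1)
  rw [sum_range_succ, hlast, hfirst, add_zero, add_zero] at hsum
  rw [thirdPoly, coeff_X_add_C_pow_mul, mul_sum, ← sum_congr rfl fun k _ => hshift k]
  exact hsum

theorem three_pow_mul_genNarayana_one_third (n m : ℕ) :
    (3 : ℝ) ^ n * genNarayana n m (1 / 3) =
      (thirdPoly n m).coeff m - 3 * (thirdPoly n m).coeff (m + 2) := by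
  have h₂ := congrArg (Nat.cast : ℕ → ℝ) (three_mul_thirdPoly_coeff_add_two n m)
  push_cast at h₂
  rw [h₂, thirdPoly_coeff_self, genNarayana_eq_sum, mul_sum]
  push_cast
  rw [← sum_sub_distrib]
  refine sum_congr rfl fun k hk => ?_
  have hpow : (3 : ℝ) ^ n * (1 / 3) ^ k = 3 ^ (n - k) := by
    rw [one_div, inv_pow, ← div_eq_mul_inv,
      pow_sub₀ (3 : ℝ) three_ne_zero (Nat.lt_succ_iff.mp (mem_range.mp hk)), div_eq_mul_inv]
  rw [mul_left_comm, hpow, genNarayanaCoeff]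
  split_ifs <;> ring

theorem coeff_X_pow_mul_thirdPoly_self (m j : ℕ) :
    (X ^ j * thirdPoly m m).coeff m = 3 ^ j * (thirdPoly m m).coeff (m + j) := by
  simp only [coeff_X_pow_mul', thirdPoly_coeff, mul_sum]
  split_ifs with hj
  · refine sum_bij_ne_zero (fun pq _ _ => (m - pq.2, m - pq.1)) ?_ ?_ ?_ ?_
    · intro pq hpq _
      simp only [HasAntidiagonal.mem_antidiagonal] at hpq ⊢
      omega
    · intro a ha _ b hb _ hab
      simp only [HasAntidiagonal.mem_antidiagonal, Prod.mk.injEq] at ha hb hab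
      ext <;> omega
    · intro pq hpq hne
      simp only [HasAntidiagonal.mem_antidiagonal] at hpq
      have hp : pq.1 ≤ m := by by_contra! h; simp [Nat.choose_eq_zero_of_lt h] at hne
      have hq : pq.2 ≤ m := by by_contra! h; simp [Nat.choose_eq_zero_of_lt h] at hne
      refine ⟨(m - pq.2, m - pq.1), ?_, ?_, ?_⟩
      · simp only [HasAntidiagonal.mem_antidiagonal]; omega
      · simp [Nat.choose_symm, hp, hq, Nat.choose_eq_zero_iff]
      · ext <;> simp <;> omega
    · intro pq hpq _
      simp only [HasAntidiagonal.mem_antidiagonal] at hpq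
      dsimp only
      rw [Nat.choose_symm (by omega), Nat.choose_symm (by omega),
        show m - (m - pq.2) = pq.2 by omega, show m - pq.1 = j + pq.2 by omega, pow_add]
      ring
  · refine (sum_eq_zero fun pq hpq => ?_).symm
    rw [HasAntidiagonal.mem_antidiagonal] at hpq
    rcases le_or_gt pq.1 m with h₁ | h₁
    · rw [Nat.choose_eq_zero_of_lt (by omega : m < pq.2), mul_zero, mul_zero]
    · simp [Nat.choose_eq_zero_of_lt h₁]

theorem thirdPoly_self_coeff_le_three_mul_coeff_add_two {m i : ℕ} (h : i + 2 ≤ m) :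
    (thirdPoly m m).coeff i ≤ 3 * (thirdPoly m m).coeff (i + 2) := by
  rw [thirdPoly_coeff, thirdPoly_coeff, Nat.antidiagonal_succ_succ', sum_cons, sum_cons, sum_map,
    mul_add, mul_add, mul_sum]
  refine le_add_left (le_add_left (sum_le_sum fun pq hpq => ?_))
  rw [HasAntidiagonal.mem_antidiagonal] at hpq
  have hpow : 3 ^ (m - pq.1) = 3 * 3 ^ (m - (pq.1 + 1)) := by
    rw [← pow_succ']; congr 1; omega
  have := Nat.choose_mul_choose_le_choose_succ_mul_choose_succ (m := m) (p := pq.1) (q := pq.2)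
    (by omega)
  simp only [Function.Embedding.coe_prodMap, Prod.map_fst, Prod.map_snd,
    Function.Embedding.coeFn_mk, Nat.succ_eq_add_one]
  calc 3 ^ (m - pq.1) * m.choose pq.1 * m.choose pq.2
      ≤ 3 ^ (m - pq.1) * (m.choose (pq.1 + 1) * m.choose (pq.2 + 1)) := by
        rw [mul_assoc]; exact Nat.mul_le_mul_left _ this
    _ = _ := by rw [hpow]; ring

theorem coeff_X_pow_add_two_mul_thirdPoly_self_le (m k : ℕ) :
    (X ^ (k + 2) * thirdPoly m m).coeff m ≤ 3 * (X ^ k * thirdPoly m m).coeff m := by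
  rw [coeff_X_pow_mul', coeff_X_pow_mul']
  split_ifs with h₁ h₂
  · have := thirdPoly_self_coeff_le_three_mul_coeff_add_two (m := m) (i := m - (k + 2)) (by omega)
    rwa [show m - (k + 2) + 2 = m - k by omega] at this
  · omega
  · exact Nat.zero_le _
  · exact Nat.zero_le _

theorem thirdPoly_coeff_le_three_mul_coeff_add_two {d m : ℕ} (hd : 3 ≤ d) :
    (thirdPoly (d + m) m).coeff m ≤ 3 * (thirdPoly (d + m) m).coeff (m + 2) := by
  have hu₁ := coeff_X_pow_mul_thirdPoly_self m 1
  have hu₂ := coeff_X_pow_mul_thirdPoly_self m 2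
  have hstep := coeff_X_pow_add_two_mul_thirdPoly_self_le m
  have ha : 3 ^ d ≤ 3 * (3 ^ (d - 2) * d.choose 2) := by
    have h₃ : 3 ≤ d.choose 2 := Nat.choose_le_choose 2 hd
    have h₉ : 3 ^ d = 3 ^ (d - 2) * 3 ^ 2 := by rw [pow_sub_mul_pow 3 (by omega : 2 ≤ d)]
    nlinarith [pow_pos (show 0 < 3 by norm_num) (d - 2)]
  rw [thirdPoly, pow_add, mul_assoc, ← thirdPoly, coeff_X_add_C_pow_mul, coeff_X_add_C_pow_mul,
    mul_sum, show d + 1 = 3 + (d - 2) by omega, sum_range_add, sum_range_add]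
  generalize thirdPoly m m = B at *
  have hv (j : ℕ) : (X ^ (j + 2) * B).coeff (m + 2) = (X ^ j * B).coeff m := by
    rw [pow_add, mul_comm, ← mul_assoc, coeff_mul_X_pow, mul_comm]
  refine add_le_add ?_ (sum_le_sum fun j _ => ?_)
  · have hv₀ := hv 0
    have hv₁ : (X ^ 1 * B).coeff (m + 2) = B.coeff (m + 1) := by rw [pow_one, coeff_X_mul]
    have hs₀ := hstep 0
    simp only [sum_range_succ, sum_range_zero, Nat.cast_id, zero_add, pow_zero, one_mul,
      Nat.sub_zero, Nat.choose_zero_right, mul_one] at hv₀ hs₀ ⊢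
    rw [hu₁, hu₂, hv₀, hv₁]
    rw [hu₂] at hs₀
    -- the `j = 1` terms agree; the `j = 0, 2` terms differ by `(3 a₂ - a₀) (b m - 3 b (m + 2)) ≥ 0`
    nlinarith
  · rw [show 3 + j = (j + 1) + 2 by omega, hv]
    have := Nat.mul_le_mul_left (3 ^ (d - (j + 1 + 2)) * d.choose (j + 1 + 2)) (hstep (j + 1))
    simp only [Nat.cast_id]
    linarith

theorem genNarayana_one_third_nonpos {n m : ℕ} (h : m + 3 ≤ n) :
    genNarayana n m (1 / 3) ≤ 0 := by
  have hle := thirdPoly_coeff_le_three_mul_coeff_add_two (d := n - m) (m := m) (by omega)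
  rw [Nat.sub_add_cancel (by omega)] at hle
  have hle' : ((thirdPoly n m).coeff m : ℝ) ≤ 3 * (thirdPoly n m).coeff (m + 2) := by
    exact_mod_cast hle
  refine nonpos_of_mul_nonpos_right ?_ (by positivity : (0 : ℝ) < 3 ^ n)
  rw [three_pow_mul_genNarayana_one_third]
  linarith

theorem genNarayana_positive_zero_le_third (m n : ℕ) (h : m + 3 ≤ n) (r : ℝ)
    (hr : 0 < r) (hroot : genNarayana n m r = 0) :
    0 < r ∧ r ≤ 1 / 3 := by
  refine ⟨hr, le_of_not_gt fun hr₃ => ?_⟩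
  have hnm₃ : (3 : ℝ) ≤ n - m := by
    rw [le_sub_iff_add_le']; exact_mod_cast h
  have hnm : (0 : ℝ) < n - m := by linarith
  have hlt := sum_mul_pow_lt_sum_mul_rpow_of_sign_change
    (d := fun k => genNarayanaCoeff n m k * (1 / 3) ^ k) (t := (m + 1) / (n - m))
    (fun k _ hk => mul_nonneg (genNarayanaCoeff_nonneg ((le_div_iff₀ hnm).mp hk)) (by positivity))
    (fun k _ hk => mul_nonpos_of_nonpos_of_nonneg
      (genNarayanaCoeff_nonpos ((div_lt_iff₀ hnm).mp hk)) (by positivity))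
    (mem_range.mpr (by omega : m + 1 < n + 1)) (by rw [div_lt_iff₀ hnm]; push_cast; nlinarith)
    (mul_neg_of_neg_of_pos (genNarayanaCoeff_add_one_neg (by omega)) (by positivity))
    (q := 3 * r) (by linarith)
  simp only [mul_assoc, ← mul_pow, ← genNarayana_eq_sum] at hlt
  rw [show 1 / 3 * (3 * r) = r by ring, hroot] at hlt
  exact hlt.not_ge (mul_nonpos_of_nonpos_of_nonneg (genNarayana_one_third_nonpos h)
    (Real.rpow_nonneg (by linarith) _))
end

section
/- Let m ≥ 0 and n ≥ m+3 be integers, and let r_{n,m}^+ denote the unique positive zero of N_{n,m}(x). Then r_{n+1,m}^+ < r_{n,m}^+. -/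
/-!
The coefficients `c_{n,k}` of `N_{n,m}` satisfy
`k (c_{n,k} - c_{n+1,k}) = C(n,k-1) C(m,k-1) (n - m)`, so for `m < n` they decrease in `n`,
strictly at `k = 1`; hence `N_{n+1,m}(r) < N_{n,m}(r) = 0` for the positive zero `r` of `N_{n,m}`.
On the other hand `k (k+1) c_{n,k} = C(n,k) C(m,k-1) (m + 1 - k (n - m))`, so the coefficients of
`N_{n+1,m}` are nonnegative up to some index `K` and nonpositive from `K` on. Such a polynomial
divided by `x^K` is antitone on `(0, ∞)`, so `N_{n+1,m}` stays negative on `[r, ∞)`.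
-/

open Finset

theorem Nat.cast_choose_succ_mul {R : Type*} [Ring R] (n k : ℕ) :
    (n.choose (k + 1) : R) * (k + 1) = n.choose k * (n - k) := by
  rcases le_or_gt k n with hkn | hnk
  · exact_mod_cast congrArg (Nat.cast : ℕ → R) (Nat.choose_succ_right_eq n k)
  · simp [Nat.choose_eq_zero_of_lt hnk, Nat.choose_eq_zero_of_lt (hnk.trans k.lt_succ_self)]

theorem pow_mul_pow_le_pow_mul_pow {R : Type*} [CommSemiring R] [PartialOrder R]
    [IsOrderedRing R] {x y : R} (hx : 0 ≤ x) (hxy : x ≤ y) {k K : ℕ} (hkK : k ≤ K) :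
    y ^ k * x ^ K ≤ x ^ k * y ^ K := by
  obtain ⟨j, rfl⟩ := Nat.exists_eq_add_of_le hkK
  have hy : 0 ≤ y := hx.trans hxy
  calc y ^ k * x ^ (k + j) = x ^ k * y ^ k * x ^ j := by ring
    _ ≤ x ^ k * y ^ k * y ^ j := by gcongr
    _ = x ^ k * y ^ (k + j) := by ring

theorem sum_mul_pow_mul_pow_le_of_sign_change {R : Type*} [CommRing R] [PartialOrder R]
    [IsOrderedRing R] {c : ℕ → R} {K : ℕ} (hpos : ∀ k < K, 0 ≤ c k)
    (hneg : ∀ k, K ≤ k → c k ≤ 0) (s : Finset ℕ) {x y : R} (hx : 0 ≤ x)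
    (hxy : x ≤ y) :
    (∑ k ∈ s, c k * y ^ k) * x ^ K ≤ (∑ k ∈ s, c k * x ^ k) * y ^ K := by
  rw [sum_mul, sum_mul]
  refine sum_le_sum fun k _ => ?_
  rcases lt_or_ge k K with hk | hk
  · calc c k * y ^ k * x ^ K = c k * (y ^ k * x ^ K) := by ring
      _ ≤ c k * (x ^ k * y ^ K) :=
        mul_le_mul_of_nonneg_left (pow_mul_pow_le_pow_mul_pow hx hxy hk.le) (hpos k hk)
      _ = c k * x ^ k * y ^ K := by ring
  · calc c k * y ^ k * x ^ K = c k * (x ^ K * y ^ k) := by ring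
      _ ≤ c k * (y ^ K * x ^ k) :=
        mul_le_mul_of_nonpos_left (pow_mul_pow_le_pow_mul_pow hx hxy hk) (hneg k hk)
      _ = c k * x ^ k * y ^ K := by ring

namespace genNarayana

noncomputable def coeff (n m k : ℕ) : ℝ :=
  (n.choose k : ℝ) * m.choose k -
    if k = 0 then 0 else (n.choose (k + 1) : ℝ) * m.choose (k - 1)

theorem eq_sum_coeff (n m : ℕ) (x : ℝ) :
    genNarayana n m x = ∑ k ∈ range (n + 1), coeff n m k * x ^ k := rfl

theorem coeff_zero (n m : ℕ) : coeff n m 0 = 1 := by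
  simp [coeff]

theorem coeff_eq_zero_of_lt {n k : ℕ} (m : ℕ) (hnk : n < k) : coeff n m k = 0 := by
  simp [coeff, Nat.choose_eq_zero_of_lt hnk, Nat.choose_eq_zero_of_lt (hnk.trans k.lt_succ_self)]

theorem mul_coeff {k : ℕ} (n m : ℕ) (hk : k ≠ 0) :
    (k * (k + 1) : ℝ) * coeff n m k = n.choose k * m.choose (k - 1) * (m + 1 - k * (n - m)) := by
  obtain ⟨j, rfl⟩ := Nat.exists_eq_add_one_of_ne_zero hk
  have hn := Nat.cast_choose_succ_mul (R := ℝ) n (j + 1)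
  have hm := Nat.cast_choose_succ_mul (R := ℝ) m j
  simp only [coeff, Nat.add_one_ne_zero, if_false, Nat.add_sub_cancel, Nat.cast_succ] at hn hm ⊢
  linear_combination (j + 2 : ℝ) * n.choose (j + 1) * hm - (j + 1 : ℝ) * m.choose j * hn

theorem coeff_nonneg {n m k : ℕ} (h : (k : ℝ) * (n - m) ≤ m + 1) : 0 ≤ coeff n m k := by
  rcases eq_or_ne k 0 with rfl | hk
  · simp [coeff_zero]
  have hk' : (0 : ℝ) < k * (k + 1) := by positivity
  refine nonneg_of_mul_nonneg_right ?_ hk'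
  rw [mul_coeff n m hk]
  exact mul_nonneg (by positivity) (by linarith)

theorem coeff_nonpos {n m k : ℕ} (hk : k ≠ 0) (h : m + 1 ≤ (k : ℝ) * (n - m)) :
    coeff n m k ≤ 0 := by
  have hk' : (0 : ℝ) < k * (k + 1) := by positivity
  refine nonpos_of_mul_nonpos_right ?_ hk'
  rw [mul_coeff n m hk]
  exact mul_nonpos_of_nonneg_of_nonpos (by positivity) (by linarith)

theorem coeff_sign_change {n m : ℕ} (hmn : m < n) :
    ∃ K : ℕ, (∀ k < K, 0 ≤ coeff n m k) ∧ ∀ k, K ≤ k → coeff n m k ≤ 0 := by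
  have hd : (0 : ℝ) < n - m := sub_pos.mpr (by exact_mod_cast hmn)
  refine ⟨⌈(m + 1 : ℝ) / (n - m)⌉₊, fun k hk => coeff_nonneg ?_,
    fun k hk => coeff_nonpos ?_ ?_⟩
  · exact ((lt_div_iff₀ hd).mp (Nat.lt_ceil.mp hk)).le
  · rintro rfl
    exact (Nat.ceil_pos.mpr (by positivity)).ne' (Nat.le_zero.mp hk)
  · exact (div_le_iff₀ hd).mp (Nat.ceil_le.mp hk)

theorem mul_coeff_sub_coeff_succ {k : ℕ} (n m : ℕ) (hk : k ≠ 0) :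
    (k : ℝ) * (coeff n m k - coeff (n + 1) m k) =
      n.choose (k - 1) * m.choose (k - 1) * (n - m) := by
  obtain ⟨j, rfl⟩ := Nat.exists_eq_add_one_of_ne_zero hk
  have hn := Nat.cast_choose_succ_mul (R := ℝ) n j
  have hm := Nat.cast_choose_succ_mul (R := ℝ) m j
  simp only [coeff, Nat.add_one_ne_zero, if_false, Nat.add_sub_cancel, Nat.choose_succ_succ,
    Nat.cast_add, Nat.cast_succ] at hn hm ⊢
  linear_combination (m.choose j : ℝ) * hn - n.choose j * hm

theorem coeff_succ_le {n m : ℕ} (hmn : m ≤ n) (k : ℕ) :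
    coeff (n + 1) m k ≤ coeff n m k := by
  rcases eq_or_ne k 0 with rfl | hk
  · simp [coeff_zero]
  have hk' : (0 : ℝ) < k := by positivity
  rw [← sub_nonneg, ← mul_nonneg_iff_of_pos_left hk', mul_coeff_sub_coeff_succ n m hk]
  exact mul_nonneg (by positivity) (sub_nonneg.mpr (by exact_mod_cast hmn))

theorem coeff_succ_one_lt {n m : ℕ} (hmn : m < n) : coeff (n + 1) m 1 < coeff n m 1 := by
  have h := mul_coeff_sub_coeff_succ n m one_ne_zero
  simp only [Nat.cast_one, one_mul, Nat.sub_self, Nat.choose_zero_right] at h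
  linarith [sub_pos.mpr (by exact_mod_cast hmn : (m : ℝ) < n)]

theorem succ_lt {n m : ℕ} (hmn : m < n) {x : ℝ} (hx : 0 < x) :
    genNarayana (n + 1) m x < genNarayana n m x := by
  have hext : genNarayana n m x = ∑ k ∈ range (n + 2), coeff n m k * x ^ k := by
    rw [sum_range_succ, coeff_eq_zero_of_lt m n.lt_succ_self, zero_mul, add_zero, eq_sum_coeff]
  rw [hext, eq_sum_coeff]
  refine sum_lt_sum (fun k _ => by gcongr; exact coeff_succ_le hmn.le k) ⟨1, by simp, ?_⟩
  gcongr
  exact coeff_succ_one_lt hmn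

end genNarayana

theorem genNarayana_positive_zero_anti_in_n_general (m n : ℕ) (h : m + 3 ≤ n)
    (r r' : ℝ) (hr : 0 < r) (hroot : genNarayana n m r = 0)
    (hroot' : genNarayana (n + 1) m r' = 0) :
    r' < r := by
  by_contra! hrr'
  obtain ⟨K, hbelow, habove⟩ := genNarayana.coeff_sign_change (show m < n + 1 by omega)
  have hneg_at_r : genNarayana (n + 1) m r < 0 :=
    hroot ▸ genNarayana.succ_lt (by omega) hr
  have hle := sum_mul_pow_mul_pow_le_of_sign_change hbelow habove (range (n + 2)) hr.le hrr'
  rw [← genNarayana.eq_sum_coeff, ← genNarayana.eq_sum_coeff, hroot', zero_mul] at hle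
  have hr'K : 0 < r' ^ K := pow_pos (hr.trans_le hrr') K
  linarith [mul_neg_of_neg_of_pos hneg_at_r hr'K]

theorem genNarayana_positive_zero_anti_in_n (m n : ℕ) (h : m + 3 ≤ n)
    (r r' : ℝ) (hr : 0 < r) (hroot : genNarayana n m r = 0)
    (hr' : 0 < r') (hroot' : genNarayana (n + 1) m r' = 0) :
    r' < r :=
  genNarayana_positive_zero_anti_in_n_general m n h r r' hr hroot hroot'
end
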